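/- For every nonnegative integer m, setting a = -1/4 - m (so 4a+1 = -4m and 4a = -1-4m), the terminating hypergeometric sum satisfies ∑_{n=0}^{4m} [(a)_n (4a+1)_n / ((4a)_n · n!)] · (4/3)^n = (-1)^m 2^{8m} (1/4)_m (7/4)_{3m} / (3^{4m} (2)_{4m}). -/

import Mathlib

/-!
Since `(b + 1)_n / (b)_n = (b + n) / b`, the summand is `(a)_n (b + n) xⁿ / (b n!)`. When
`a x = b (x - 1)` (here `b = 4a`, `x = 4/3`) this is the forward difference of
`n (a)_n xⁿ / (b (x - 1) n!)`, so the sum telescopes to its value at `n = 4m + 1`. The value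
`(-1/4 - m)_{4m+1}` splits into the `m + 1` negative factors, a reflected `(1/4)_{m+1}`, and the
positive ones, `(3/4)_{3m}`.
-/

open Polynomial Finset

section Pochhammer

variable {R : Type*}

theorem ascPochhammer_succ_eval_left [CommSemiring R] (x : R) (n : ℕ) :
    (ascPochhammer R (n + 1)).eval x = x * (ascPochhammer R n).eval (x + 1) := by
  simp [ascPochhammer_succ_left, eval_comp]

theorem mul_ascPochhammer_eval_add_one [CommSemiring R] (x : R) (n : ℕ) :
    x * (ascPochhammer R n).eval (x + 1) = (ascPochhammer R n).eval x * (x + n) := by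
  rw [← ascPochhammer_succ_eval_left, ascPochhammer_succ_eval]

theorem ascPochhammer_eval_add [CommSemiring R] (x : R) (n k : ℕ) :
    (ascPochhammer R (n + k)).eval x =
      (ascPochhammer R n).eval x * (ascPochhammer R k).eval (x + n) := by
  simp [← ascPochhammer_mul, eval_comp]

theorem ascPochhammer_eval_one_sub_sub [CommRing R] (r : R) (k : ℕ) :
    (ascPochhammer R k).eval (1 - r - k) = (-1) ^ k * (ascPochhammer R k).eval r := by
  rw [show (1 - r - k : R) = -(r + k - 1) by ring, ascPochhammer_eval_neg_eq_descPochhammer,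
    descPochhammer_eval_eq_ascPochhammer]
  ring_nf

theorem ascPochhammer_eval_one_sub_sub_add [CommRing R] (r : R) (n k : ℕ) :
    (ascPochhammer R (n + k)).eval (1 - r - n) =
      (-1) ^ n * (ascPochhammer R n).eval r * (ascPochhammer R k).eval (1 - r) := by
  rw [ascPochhammer_eval_add, ascPochhammer_eval_one_sub_sub, sub_add_cancel]

theorem ascPochhammer_eval_two [Semiring R] (n : ℕ) :
    (ascPochhammer R n).eval 2 = (n + 1).factorial := by
  simpa [one_add_one_eq_two, add_comm 1] using factorial_mul_ascPochhammer R 1 n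

theorem ascPochhammer_eval_neg_natCast_ne_zero [CommRing R] [IsDomain R] [CharZero R] {n k : ℕ}
    (h : n ≤ k) : (ascPochhammer R n).eval (-(k : R)) ≠ 0 := by
  rw [ne_eq, ascPochhammer_eval_eq_zero_iff]
  rintro ⟨j, hj, hjk⟩
  rw [neg_neg, Nat.cast_inj] at hjk
  omega

end Pochhammer

theorem sum_range_hypergeometric_succ_eq {K : Type*} [Field K] [CharZero K] {a b x : K} (hb : b ≠ 0)
    (hx : x ≠ 1) (habx : a * x = b * (x - 1)) (N : ℕ)
    (hbN : ∀ n < N, (ascPochhammer K n).eval b ≠ 0) :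
    ∑ n ∈ range N, (ascPochhammer K n).eval a * (ascPochhammer K n).eval (b + 1) /
        ((ascPochhammer K n).eval b * n.factorial) * x ^ n =
      N * (ascPochhammer K N).eval a * x ^ N / (b * (x - 1) * N.factorial) := by
  set f : ℕ → K := fun n ↦
    n * (ascPochhammer K n).eval a * x ^ n / (b * (x - 1) * n.factorial) with hf
  have hx1 : x - 1 ≠ 0 := sub_ne_zero.mpr hx
  have hterm : ∀ n < N, (ascPochhammer K n).eval a * (ascPochhammer K n).eval (b + 1) /
      ((ascPochhammer K n).eval b * n.factorial) * x ^ n = f (n + 1) - f n := by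
    intro n hn
    have hshift : (ascPochhammer K n).eval (b + 1) = (ascPochhammer K n).eval b * (b + n) / b := by
      rw [eq_div_iff hb, mul_comm, mul_ascPochhammer_eval_add_one]
    simp only [hf, hshift, ascPochhammer_succ_eval, Nat.factorial_succ]
    have hbn := hbN n hn
    have hfact : (n.factorial : K) ≠ 0 := Nat.cast_ne_zero.mpr n.factorial_ne_zero
    have hsucc : (n + 1 : K) ≠ 0 := by exact_mod_cast n.succ_ne_zero
    push_cast
    field_simp
    linear_combination -(ascPochhammer K n).eval a * x ^ n * habx
  rw [sum_congr rfl fun n hn ↦ hterm n (mem_range.mp hn), sum_range_sub]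
  simp [hf]

theorem ascPochhammer_eval_neg_quarter_sub (m : ℕ) :
    (ascPochhammer ℚ (4 * m + 1)).eval (-1/4 - (m : ℚ)) =
      (-1) ^ (m + 1) * (ascPochhammer ℚ m).eval (1/4) * (ascPochhammer ℚ (3 * m)).eval (7/4) / 4 := by
  have hsplit := ascPochhammer_eval_one_sub_sub_add (1/4 : ℚ) (m + 1) (3 * m)
  have hshift := mul_ascPochhammer_eval_add_one (3/4 : ℚ) (3 * m)
  rw [show m + 1 + 3 * m = 4 * m + 1 by ring] at hsplit
  push_cast at hsplit hshift
  rw [show (3/4 + 1 : ℚ) = 7/4 by norm_num] at hshift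
  have hm : (3/4 + 3 * m : ℚ) ≠ 0 := by positivity
  rw [show (-1/4 - m : ℚ) = 1 - 1/4 - (m + 1) by ring, hsplit, ascPochhammer_succ_eval,
    show (1 - 1/4 : ℚ) = 3/4 by norm_num,
    eq_div_of_mul_eq hm hshift.symm]
  field_simp

/-- Formula (1,4,4-1)(i), case `a = -1/4-m`:
`₂F₁(a, 4a+1; 4a; 4/3) = (-1)^m 2^{8m} (1/4)_m (7/4)_{3m} / (3^{4m} (2)_{4m})`. -/
theorem case2_quarter (m : ℕ) :
    ∑ n ∈ Finset.range (4 * m + 1),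
      ((ascPochhammer ℚ n).eval (-1/4 - (m : ℚ)) *
        (ascPochhammer ℚ n).eval (4 * (-1/4 - (m : ℚ)) + 1) /
        ((ascPochhammer ℚ n).eval (4 * (-1/4 - (m : ℚ))) * (n.factorial : ℚ))) * (4 / 3 : ℚ) ^ n
    = (-1 : ℚ) ^ m * (2 : ℚ) ^ (8 * m) * (ascPochhammer ℚ m).eval (1/4 : ℚ) *
        (ascPochhammer ℚ (3 * m)).eval (7/4 : ℚ) /
        ((3 : ℚ) ^ (4 * m) * (ascPochhammer ℚ (4 * m)).eval (2 : ℚ)) := by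
  have hb : 4 * (-1/4 - (m : ℚ)) = -((4 * m + 1 : ℕ) : ℚ) := by push_cast; ring
  have hm : ((4 * m + 1 : ℕ) : ℚ) ≠ 0 := Nat.cast_ne_zero.mpr (Nat.succ_ne_zero _)
  rw [sum_range_hypergeometric_succ_eq (hb ▸ neg_ne_zero.mpr hm) (by norm_num) (by ring) _
      fun n hn ↦ hb ▸ ascPochhammer_eval_neg_natCast_ne_zero hn.le,
    ascPochhammer_eval_neg_quarter_sub, ascPochhammer_eval_two, Nat.factorial_succ, hb,
    show (2 : ℚ) ^ (8 * m) = 4 ^ (4 * m) by rw [pow_mul, pow_mul]; norm_num, div_pow]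
  push_cast at hm ⊢
  field_simp
  ring
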